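/- If a and b are two points of a finite coloured linear order A with a < b realizing the same 1-character (same colour, same set of colours to the left, same set of colours to the right), then A ≡_2 A \ {b}. -/

import Mathlib

/-!
Spoiler's first move is answered by the same point, except that `b` is answered by `a`.
The remaining one-move games only compare sets of colours, and deleting `b` changes none of
them: the colour of `b` still occurs to the left of `b` (at `a`) and to the right of `b` (it
occurs to the right of `a`, where `a` sees the same colours as `b`). Answering `b` by `a` works
because `a` and `b` have the same 1-character.
-/

/-- A coloured linear order: a linear order together with a colouring map into `C`. -/
structure CLO (C : Type) where
  carrier : Type
  [ord : LinearOrder carrier]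
  colour : carrier → C

attribute [instance] CLO.ord

namespace CLO

variable {C : Type}

/-- Induced coloured suborder on a subset. -/
def sub (A : CLO C) (s : Set A.carrier) : CLO C where
  carrier := ↥s
  colour := fun x => A.colour x.val

/-- The coloured suborder `A^{<a}`. -/
def left (A : CLO C) (a : A.carrier) : CLO C := A.sub {x | x < a}

/-- The coloured suborder `A^{>a}`. -/
def right (A : CLO C) (a : A.carrier) : CLO C := A.sub {x | a < x}

/-- `n`-move Ehrenfeucht–Fraïssé equivalence of coloured linear orders, via the standard
back-and-forth characterization for linear orders. -/
def EFEquiv : ℕ → CLO C → CLO C → Prop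
  | 0, _, _ => True
  | n + 1, A, B =>
      (∀ a : A.carrier, ∃ b : B.carrier, A.colour a = B.colour b ∧
        EFEquiv n (A.left a) (B.left b) ∧ EFEquiv n (A.right a) (B.right b)) ∧
      (∀ b : B.carrier, ∃ a : A.carrier, A.colour a = B.colour b ∧
        EFEquiv n (A.left a) (B.left b) ∧ EFEquiv n (A.right a) (B.right b))

/-- `a` and `b` realize the same `n`-character (including the colour) in `A`. -/
def SameChar (n : ℕ) (A : CLO C) (a b : A.carrier) : Prop :=
  A.colour a = A.colour b ∧ EFEquiv n (A.left a) (A.left b) ∧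
    EFEquiv n (A.right a) (A.right b)

/-- The finite coloured linear order (string) given by a list. -/
def ofList (l : List C) : CLO C where
  carrier := Fin l.length
  colour := l.get

/-- `A` is `≡ₙ`-optimal: no strictly shorter coloured linear order is `n`-equivalent to it. -/
def Optimal (n : ℕ) (A : CLO C) : Prop :=
  ∀ B : CLO C, Finite B.carrier → EFEquiv n A B → Nat.card A.carrier ≤ Nat.card B.carrier

end CLO

theorem Set.image_setOf_ne_inter_eq {α β : Type*} (f : α → β) {s : Set α} {b : α}
    (hb : b ∈ s → ∃ c ∈ s, c ≠ b ∧ f c = f b) : f '' ({z | z ≠ b} ∩ s) = f '' s := by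
  refine (Set.image_mono Set.inter_subset_right).antisymm ?_
  rintro _ ⟨y, hy, rfl⟩
  by_cases hyb : y = b
  · subst hyb
    obtain ⟨c, hc, hcy, hfc⟩ := hb hy
    exact ⟨c, ⟨hcy, hc⟩, hfc⟩
  · exact ⟨y, ⟨hyb, hy⟩, rfl⟩

namespace CLO

variable {C : Type}

theorem EFEquiv.symm : ∀ {n : ℕ} {A B : CLO C}, EFEquiv n A B → EFEquiv n B A
  | 0, _, _, _ => trivial
  | _ + 1, _, _, ⟨forth, back⟩ =>
    ⟨fun b => let ⟨a, hc, hl, hr⟩ := back b; ⟨a, hc.symm, hl.symm, hr.symm⟩,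
      fun a => let ⟨b, hc, hl, hr⟩ := forth a; ⟨b, hc.symm, hl.symm, hr.symm⟩⟩

theorem EFEquiv.trans : ∀ {n : ℕ} {A B D : CLO C}, EFEquiv n A B → EFEquiv n B D → EFEquiv n A D
  | 0, _, _, _, _, _ => trivial
  | _ + 1, _, _, _, ⟨forth₁, back₁⟩, ⟨forth₂, back₂⟩ =>
    ⟨fun a =>
        let ⟨b, hc₁, hl₁, hr₁⟩ := forth₁ a
        let ⟨d, hc₂, hl₂, hr₂⟩ := forth₂ b
        ⟨d, hc₁.trans hc₂, hl₁.trans hl₂, hr₁.trans hr₂⟩,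
      fun d =>
        let ⟨b, hc₂, hl₂, hr₂⟩ := back₂ d
        let ⟨a, hc₁, hl₁, hr₁⟩ := back₁ b
        ⟨a, hc₁.trans hc₂, hl₁.trans hl₂, hr₁.trans hr₂⟩⟩

lemma efEquiv_one_iff {X Y : CLO C} :
    EFEquiv 1 X Y ↔ Set.range X.colour = Set.range Y.colour := by
  simp only [EFEquiv, and_true, Set.Subset.antisymm_iff, Set.range_subset_iff, Set.mem_range]
  exact ⟨fun ⟨h₁, h₂⟩ => ⟨fun x => (h₁ x).imp fun _ => Eq.symm, h₂⟩,
    fun ⟨h₁, h₂⟩ => ⟨fun x => (h₁ x).imp fun _ => Eq.symm, h₂⟩⟩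

lemma range_colour_sub (A : CLO C) (s : Set A.carrier) :
    Set.range (A.sub s).colour = A.colour '' s := by
  ext; simp [sub]

lemma range_colour_left (A : CLO C) (x : A.carrier) :
    Set.range (A.left x).colour = A.colour '' Set.Iio x :=
  range_colour_sub A _

lemma range_colour_right (A : CLO C) (x : A.carrier) :
    Set.range (A.right x).colour = A.colour '' Set.Ioi x :=
  range_colour_sub A _

lemma range_colour_sub_left (A : CLO C) (s : Set A.carrier) (x : s) :
    Set.range ((A.sub s).left x).colour = A.colour '' (s ∩ Set.Iio x.1) := by
  ext; simp [left, sub, ← Subtype.coe_lt_coe, and_assoc, and_left_comm]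

lemma range_colour_sub_right (A : CLO C) (s : Set A.carrier) (x : s) :
    Set.range ((A.sub s).right x).colour = A.colour '' (s ∩ Set.Ioi x.1) := by
  ext; simp [right, sub, ← Subtype.coe_lt_coe, and_assoc, and_left_comm]

lemma efEquiv_one_left_erase (A : CLO C) {b : A.carrier}
    (hb : ∃ c < b, A.colour c = A.colour b) (x : A.carrier) (hx : x ≠ b) :
    EFEquiv 1 (A.left x) ((A.sub {z | z ≠ b}).left ⟨x, hx⟩) := by
  rw [efEquiv_one_iff, range_colour_left, range_colour_sub_left, Set.image_setOf_ne_inter_eq]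
  rintro (hbx : b < x)
  obtain ⟨c, hcb, hc⟩ := hb
  exact ⟨c, hcb.trans hbx, hcb.ne, hc⟩

lemma efEquiv_one_right_erase (A : CLO C) {b : A.carrier}
    (hb : ∃ c, b < c ∧ A.colour c = A.colour b) (x : A.carrier) (hx : x ≠ b) :
    EFEquiv 1 (A.right x) ((A.sub {z | z ≠ b}).right ⟨x, hx⟩) := by
  rw [efEquiv_one_iff, range_colour_right, range_colour_sub_right, Set.image_setOf_ne_inter_eq]
  rintro (hxb : x < b)
  obtain ⟨c, hbc, hc⟩ := hb
  exact ⟨c, hxb.trans hbc, hbc.ne', hc⟩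

end CLO

theorem stmt11_general {C : Type} (A : CLO C) (a b : A.carrier)
    (hab : a < b) (h : CLO.SameChar 1 A a b) :
    CLO.EFEquiv 2 A (A.sub {x | x ≠ b}) := by
  obtain ⟨hc, hL, hR⟩ := h
  -- `b` lies right of `a`, so its colour also occurs right of `b`
  have hbR : ∃ c, b < c ∧ A.colour c = A.colour b := by
    obtain ⟨c, hcb, -⟩ := hR.1 ⟨b, hab⟩
    exact ⟨c.1, c.2, hcb.symm⟩
  have hmatch (x : A.carrier) (hx : x ≠ b) :
      A.colour x = (A.sub {z | z ≠ b}).colour ⟨x, hx⟩ ∧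
        CLO.EFEquiv 1 (A.left x) ((A.sub {z | z ≠ b}).left ⟨x, hx⟩) ∧
        CLO.EFEquiv 1 (A.right x) ((A.sub {z | z ≠ b}).right ⟨x, hx⟩) :=
    ⟨rfl, CLO.efEquiv_one_left_erase A ⟨a, hab, hc⟩ x hx, CLO.efEquiv_one_right_erase A hbR x hx⟩
  refine ⟨fun x => ?_, fun y => ⟨y.1, hmatch y.1 y.2⟩⟩
  rcases eq_or_ne x b with rfl | hx
  · obtain ⟨-, hLa, hRa⟩ := hmatch a hab.ne
    exact ⟨⟨a, hab.ne⟩, hc.symm, hL.symm.trans hLa, hR.symm.trans hRa⟩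
  · exact ⟨⟨x, hx⟩, hmatch x hx⟩

/-- if `a < b` in a finite coloured linear order `A` realize the same
`1`-character, then `A ≡₂ A \ {b}`. -/
theorem stmt11 {C : Type} (A : CLO C) [Finite A.carrier] (a b : A.carrier)
    (hab : a < b) (h : CLO.SameChar 1 A a b) :
    CLO.EFEquiv 2 A (A.sub {x | x ≠ b}) :=
  stmt11_general A a b hab h
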